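/- arXiv:0708.2542 — 4 statements merged into one kernel-verified Lean document; each statement's English description precedes it below -/
import Mathlib

section
/- Let U ⊆ ℝⁿ be an open convex cone and f : U → ℝ continuously differentiable and positively homogeneous of degree 1. Then f is sub-additive on U if and only if for all u, u+v ∈ U we have Σᵢ uᵢ · ∂f/∂uᵢ(u+v) ≤ f(u). -/
/-!
Along a ray, subadditivity and homogeneity give `f (w + t • u) ≤ f w + t * f u` for `t > 0`;
dividing by `t` and letting `t → 0⁺` bounds the directional derivative `f'(w) u` by `f u`.
Conversely, the mean value theorem on the segment from `u` to `u + v` writes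
`f (u + v) - f u = f'(z) v` for some `z = v + (z - v)` in the cone, and the gradient inequality
bounds this by `f v`.
-/

open Filter Topology

theorem Convex.add_mem_of_smul_mem {E : Type*} [AddCommGroup E] [Module ℝ E] {U : Set E}
    (hconv : Convex ℝ U) (hcone : ∀ (h : ℝ), 0 < h → ∀ u ∈ U, h • u ∈ U) {a b : E}
    (ha : a ∈ U) (hb : b ∈ U) : a + b ∈ U := by
  have hmid := hcone 2 two_pos _ (hconv ha hb one_half_pos.le one_half_pos.le (add_halves 1))
  rwa [smul_add, smul_smul, smul_smul, mul_one_div_cancel two_ne_zero, one_smul, one_smul]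
    at hmid

theorem ContinuousLinearMap.sum_mul_apply_single {ι : Type*} [Fintype ι] [DecidableEq ι]
    (L : (ι → ℝ) →L[ℝ] ℝ) (x : ι → ℝ) : ∑ i, x i * L (Pi.single i 1) = L x := by
  conv_rhs => rw [pi_eq_sum_univ' x]
  simp only [map_sum, map_smul, smul_eq_mul]

section

variable {E : Type*} [NormedAddCommGroup E] [NormedSpace ℝ E] {f : E → ℝ}

theorem HasFDerivAt.apply_le_of_eventually_le {f' : E →L[ℝ] ℝ} {w u : E} {c : ℝ}
    (hf : HasFDerivAt f f' w) (hle : ∀ᶠ t in 𝓝[>] (0 : ℝ), f (w + t • u) ≤ f w + t * c) :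
    f' u ≤ c := by
  refine le_of_tendsto (hf.hasLineDerivAt u).tendsto_slope_zero_right ?_
  filter_upwards [hle, self_mem_nhdsWithin] with t ht (htpos : 0 < t)
  rw [smul_eq_mul, inv_mul_le_iff₀ htpos]
  linarith

theorem Convex.add_le_of_fderiv_apply_le {U : Set E} (hconv : Convex ℝ U) (hU : IsOpen U)
    (hf : DifferentiableOn ℝ f U) {u v : E} {c : ℝ} (hu : u ∈ U) (huv : u + v ∈ U)
    (hle : ∀ z ∈ segment ℝ u (u + v), fderiv ℝ f z v ≤ c) : f (u + v) ≤ f u + c := by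
  obtain ⟨z, hz, hmvt⟩ := domain_mvt
    (fun x hx ↦ (hf.differentiableAt (hU.mem_nhds hx)).hasFDerivAt.hasFDerivWithinAt)
    hconv hu huv
  rw [add_sub_cancel_left] at hmvt
  linarith [hle z hz]

end

/-- Characterization of sub-additivity via the gradient, for continuously differentiable
positively homogeneous (degree 1) functions on an open convex cone. -/
theorem subadditive_iff_gradient_ineq {n : ℕ} (U : Set (Fin n → ℝ)) (hU : IsOpen U)
    (hconv : Convex ℝ U) (hcone : ∀ (h : ℝ), 0 < h → ∀ u ∈ U, h • u ∈ U)
    (f : (Fin n → ℝ) → ℝ) (hf : ContDiffOn ℝ 1 f U)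
    (hhom : ∀ (h : ℝ), 0 < h → ∀ u ∈ U, f (h • u) = h * f u) :
    (∀ u v : Fin n → ℝ, u ∈ U → v ∈ U → u + v ∈ U → f (u + v) ≤ f u + f v) ↔
      (∀ u v : Fin n → ℝ, u ∈ U → u + v ∈ U →
        ∑ i, u i * fderiv ℝ f (u + v) (Pi.single i 1) ≤ f u) := by
  have hdiff : DifferentiableOn ℝ f U := hf.differentiableOn one_ne_zero
  simp_rw [ContinuousLinearMap.sum_mul_apply_single]
  constructor
  · intro hsub u v hu huv
    refine (hdiff.differentiableAt (hU.mem_nhds huv)).hasFDerivAt.apply_le_of_eventually_le ?_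
    filter_upwards [self_mem_nhdsWithin] with t (ht : 0 < t)
    have htu : t • u ∈ U := hcone t ht u hu
    rw [← hhom t ht u hu]
    exact hsub _ _ huv htu (hconv.add_mem_of_smul_mem hcone huv htu)
  · intro hgrad u v hu hv huv
    refine hconv.add_le_of_fderiv_apply_le hU hdiff hu huv fun z hz ↦ ?_
    have hzU : v + (z - v) ∈ U := by
      rw [add_sub_cancel]
      exact hconv.segment_subset hu huv hz
    simpa using hgrad v (z - v) hv hzU
end

section
/- Let f : ℝⁿ → ℝ (or on an open cone containing the positive orthant) be continuously differentiable, positively homogeneous of degree 1, and sub-additive. Define the Euler contribution of coordinate i at the point 𝟙 = (1,…,1) as ∂f/∂uᵢ(𝟙), and the stand-alone risk of coordinate i as f(eᵢ) where eᵢ is the i-th standard basis vector. Then ∂f/∂uᵢ(𝟙) ≤ f(eᵢ) for each i. -/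
/-!
Sub-additivity and homogeneity give `f (x + t • v) ≤ f x + t * f v` for `t > 0`, so every
right difference quotient of `f` at `x` in direction `v` is at most `f v`; so is its limit,
the directional derivative `fderiv ℝ f x v`. Take `x = 𝟙` and `v = eᵢ`.
-/

theorem HasLineDerivAt.le_of_forall_pos_le_add_mul {E : Type*} [AddCommGroup E] [Module ℝ E]
    {f : E → ℝ} {f' c : ℝ} {x v : E} (h : HasLineDerivAt ℝ f f' x v)
    (hle : ∀ t : ℝ, 0 < t → f (x + t • v) ≤ f x + t * c) : f' ≤ c := by
  refine le_of_tendsto h.tendsto_slope_zero_right ?_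
  filter_upwards [self_mem_nhdsWithin] with t (ht : 0 < t)
  rw [smul_eq_mul, inv_mul_le_iff₀ ht]
  linarith [hle t ht]

theorem DifferentiableAt.fderiv_apply_le_of_subadditive {E : Type*} [NormedAddCommGroup E]
    [NormedSpace ℝ E] {f : E → ℝ} {x : E} (hf : DifferentiableAt ℝ f x)
    (hhom : ∀ t : ℝ, 0 < t → ∀ u, f (t • u) = t * f u) (hsub : ∀ u w : E, f (u + w) ≤ f u + f w)
    (v : E) : fderiv ℝ f x v ≤ f v :=
  (hf.hasFDerivAt.hasLineDerivAt v).le_of_forall_pos_le_add_mul fun t ht =>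
    (hsub x (t • v)).trans_eq (by rw [hhom t ht])

/-- Euler contributions never exceed stand-alone risks: if `f` is continuously
differentiable, positively homogeneous of degree 1 and sub-additive, then
`∂f/∂uᵢ(𝟙) ≤ f(eᵢ)` for every `i`. -/
theorem euler_contribution_le_standalone {n : ℕ} (f : (Fin n → ℝ) → ℝ)
    (hf : ContDiff ℝ 1 f)
    (hhom : ∀ (h : ℝ), 0 < h → ∀ u, f (h • u) = h * f u)
    (hsub : ∀ u v : Fin n → ℝ, f (u + v) ≤ f u + f v) :
    ∀ i : Fin n, fderiv ℝ f (fun _ => 1) (Pi.single i 1) ≤ f (Pi.single i 1) := fun _ =>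
  (hf.differentiable one_ne_zero _).fderiv_apply_le_of_subadditive hhom hsub _
end

section
/- Let f : ℝⁿ → ℝ be continuously differentiable (away from 0), positively homogeneous of degree 1 and sub-additive. Define the marginal contribution of coordinate i at 𝟙 = (1,…,1) as mᵢ = f(𝟙) − f(𝟙 − eᵢ), and the Euler contribution as cᵢ = ∂f/∂uᵢ(𝟙). Then mᵢ ≤ cᵢ for every i, and consequently Σᵢ mᵢ ≤ Σᵢ (f(𝟙) − f(𝟙 − eᵢ)) ≤ f(𝟙). -/
/-!
Sub-additivity and positive homogeneity make `f` convex, so `f` lies above its tangent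
hyperplane at `𝟙`: `f (𝟙 - eᵢ) ≥ f 𝟙 - cᵢ`, i.e. `mᵢ ≤ cᵢ`. Summing over `i`, the Euler
contributions add up to `f' 𝟙 𝟙`, which equals `f 𝟙` by Euler's identity for functions that are
homogeneous of degree one.
-/

section PositivelyHomogeneous

variable {E : Type*}

theorem map_zero_of_posHomogeneous [AddCommGroup E] [Module ℝ E] {f : E → ℝ}
    (hhom : ∀ h : ℝ, 0 < h → ∀ u, f (h • u) = h * f u) : f 0 = 0 := by
  have h2 := hhom 2 two_pos 0
  rw [smul_zero] at h2
  linarith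

theorem map_smul_of_posHomogeneous [AddCommGroup E] [Module ℝ E] {f : E → ℝ}
    (hhom : ∀ h : ℝ, 0 < h → ∀ u, f (h • u) = h * f u) {h : ℝ} (h0 : 0 ≤ h) (u : E) :
    f (h • u) = h * f u := by
  rcases h0.eq_or_lt with rfl | hpos
  · rw [zero_smul, zero_mul, map_zero_of_posHomogeneous hhom]
  · exact hhom h hpos u

theorem convexOn_univ_of_posHomogeneous_of_subadditive [AddCommGroup E] [Module ℝ E]
    {f : E → ℝ} (hhom : ∀ h : ℝ, 0 < h → ∀ u, f (h • u) = h * f u)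
    (hsub : ∀ u v : E, f (u + v) ≤ f u + f v) : ConvexOn ℝ Set.univ f := by
  refine ⟨convex_univ, fun x _ y _ a b ha hb _ => ?_⟩
  calc f (a • x + b • y) ≤ f (a • x) + f (b • y) := hsub _ _
    _ = a • f x + b • f y := by
      rw [map_smul_of_posHomogeneous hhom ha, map_smul_of_posHomogeneous hhom hb, smul_eq_mul,
        smul_eq_mul]

theorem HasFDerivAt.apply_self_of_posHomogeneous [NormedAddCommGroup E] [NormedSpace ℝ E]
    {f : E → ℝ} {f' : E →L[ℝ] ℝ} {x : E}
    (hhom : ∀ h : ℝ, 0 < h → ∀ u, f (h • u) = h * f u) (hf : HasFDerivAt f f' x) :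
    f' x = f x := by
  have hchain : HasDerivAt (fun t : ℝ => f (t • x)) (f' x) 1 := by
    have hray : HasDerivAt (fun t : ℝ => t • x) x 1 := by
      simpa using (hasDerivAt_id (1 : ℝ)).smul_const x
    exact (one_smul ℝ x ▸ hf).comp_hasDerivAt 1 hray
  have hlinear : HasDerivAt (fun t : ℝ => f (t • x)) (f x) 1 := by
    refine (hasDerivAt_mul_const (f x)).congr_of_eventuallyEq ?_
    filter_upwards [lt_mem_nhds one_pos] with t ht
    exact hhom t ht x
  exact hchain.unique hlinear

end PositivelyHomogeneous

theorem ConvexOn.hasFDerivAt_apply_le_sub {E : Type*} [NormedAddCommGroup E] [NormedSpace ℝ E]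
    {f : E → ℝ} {f' : E →L[ℝ] ℝ} {x : E} (hconv : ConvexOn ℝ Set.univ f)
    (hf : HasFDerivAt f f' x) (v : E) : f' v ≤ f (x + v) - f x := by
  let line : ℝ →ᵃ[ℝ] E := AffineMap.lineMap x (x + v)
  have hline : HasDerivAt line v 0 := by
    simpa using AffineMap.hasDerivAt_lineMap (a := x) (b := x + v) (x := (0 : ℝ))
  have hf0 : HasFDerivAt f f' (line 0) := by simpa [line] using hf
  have hslope := (hconv.comp_affineMap line).le_slope_of_hasDerivAt (Set.mem_univ 0)
    (Set.mem_univ 1) zero_lt_one (hf0.comp_hasDerivAt 0 hline)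
  simpa [slope_def_field, line] using hslope

/-- Marginal risk contributions are below the Euler contributions, and their sum
underestimates total risk. Here `f` is continuously differentiable away from `0`,
positively homogeneous of degree 1, and sub-additive. -/
theorem marginal_le_euler_contribution {n : ℕ} (hn : 0 < n) (f : (Fin n → ℝ) → ℝ)
    (hf : ContDiffOn ℝ 1 f {x | x ≠ 0})
    (hhom : ∀ (h : ℝ), 0 < h → ∀ u, f (h • u) = h * f u)
    (hsub : ∀ u v : Fin n → ℝ, f (u + v) ≤ f u + f v) :
    (∀ i : Fin n,
        f (fun _ => 1) - f ((fun _ => 1) - Pi.single i 1)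
          ≤ fderiv ℝ f (fun _ => 1) (Pi.single i 1)) ∧
      ∑ i, (f (fun _ => 1) - f ((fun _ => 1) - Pi.single i 1)) ≤ f (fun _ => 1) := by
  set one : Fin n → ℝ := fun _ => 1
  have hone : one ≠ 0 := fun h => one_ne_zero (congrFun h ⟨0, hn⟩)
  have hderiv : HasFDerivAt f (fderiv ℝ f one) one :=
    ((hf.contDiffAt (isOpen_ne.mem_nhds hone)).differentiableAt one_ne_zero).hasFDerivAt
  have hmarginal (i : Fin n) :
      f one - f (one - Pi.single i 1) ≤ fderiv ℝ f one (Pi.single i 1) := by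
    have htangent := ConvexOn.hasFDerivAt_apply_le_sub
      (convexOn_univ_of_posHomogeneous_of_subadditive hhom hsub) hderiv (-Pi.single i 1)
    rw [map_neg, ← sub_eq_add_neg] at htangent
    linarith
  refine ⟨hmarginal, ?_⟩
  calc ∑ i, (f one - f (one - Pi.single i 1)) ≤ ∑ i, fderiv ℝ f one (Pi.single i 1) :=
        Finset.sum_le_sum fun i _ => hmarginal i
    _ = fderiv ℝ f one one := by rw [← map_sum, Finset.univ_sum_single]
    _ = f one := hderiv.apply_self_of_posHomogeneous hhom
end

section
/- Let X₁,…,Xₙ be integrable real random variables, X = Σᵢ Xᵢ, and suppose X has a continuous distribution at the quantile level (P[X ≤ −VaR_α(X)] = 1 − α with P[X = −VaR_α(X)] = 0), where VaR_α(X) = q_α(−X) and q_γ(Y) = inf{y : P[Y ≤ y] ≥ γ}. Then the Expected Shortfall ES_α(X) = (1/(1−α))·∫_α^1 VaR_u(X) du satisfies ES_α(X) = −E[X | X ≤ −VaR_α(X)], and the quantities cᵢ = −(1−α)^{-1}·E[Xᵢ·𝟙{X ≤ −VaR_α(X)}] satisfy Σᵢ cᵢ = ES_α(X). -/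
open MeasureTheory
open scoped BigOperators

/-- The lower `γ`-quantile `q_γ(Y) = inf{y : P[Y ≤ y] ≥ γ}`. -/
noncomputable def lowerQuantile {Ω : Type*} [MeasurableSpace Ω] (μ : Measure Ω)
    (Y : Ω → ℝ) (γ : ℝ) : ℝ :=
  sInf {y | ENNReal.ofReal γ ≤ μ {ω | Y ω ≤ y}}

/-- Value-at-Risk at level `α`: `VaR_α(X) = q_α(−X)`. -/
noncomputable def valueAtRisk {Ω : Type*} [MeasurableSpace Ω] (μ : Measure Ω)
    (X : Ω → ℝ) (α : ℝ) : ℝ :=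
  lowerQuantile μ (fun ω => -X ω) α

/-- Expected Shortfall at level `α`. -/
noncomputable def expectedShortfall {Ω : Type*} [MeasurableSpace Ω] (μ : Measure Ω)
    (X : Ω → ℝ) (α : ℝ) : ℝ :=
  (1 - α)⁻¹ * ∫ u in α..1, valueAtRisk μ X u

/-!
Quantile transform: the Galois connection `q_u(Y) ≤ s ↔ u ≤ F_Y(s)` for `0 < u < 1` shows that
`u ↦ q_u(Y)`, pushed forward from the uniform distribution on `(0,1)`, has the law of `Y`.
Since `q` is monotone, `(α, 1)` and `{u | q_α(Y) ≤ q_u(Y)}` differ only inside the level set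
`{u | q_u(Y) = q_α(Y)}`, which has the probability of `{Y = q_α(Y)}`, i.e. zero. Hence
`∫_α^1 q_u(Y) du = E[Y; Y ≥ q_α(Y)]`; with `Y = -X` this is the tail formula for `ES_α(X)`,
and the Euler contributions add up to it by linearity of the integral.
-/

open Set Filter ProbabilityTheory

theorem StieltjesFunction.sInf_le_iff (f : StieltjesFunction ℝ) {u : ℝ}
    (hne : {y | u ≤ f y}.Nonempty) (hbdd : BddBelow {y | u ≤ f y}) (s : ℝ) :
    sInf {y | u ≤ f y} ≤ s ↔ u ≤ f s := by
  refine ⟨fun hs => ?_, fun hs => csInf_le hbdd hs⟩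
  set a := sInf {y | u ≤ f y}
  have hright : u ≤ f a := by
    refine ge_of_tendsto ((f.right_continuous a).mono Ioi_subset_Ici_self)
      (eventually_nhdsWithin_of_forall fun y (hy : a < y) => ?_)
    obtain ⟨t, ht, hty⟩ := exists_lt_of_csInf_lt hne hy
    exact ht.trans (f.mono hty.le)
  exact hright.trans (f.mono hs)

theorem sInf_le_iff_le_cdf (ν : Measure ℝ) {u : ℝ} (hu : u ∈ Ioo 0 1) (s : ℝ) :
    sInf {y | u ≤ cdf ν y} ≤ s ↔ u ≤ cdf ν s := by
  refine (cdf ν).sInf_le_iff ?_ ?_ s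
  · exact ((tendsto_cdf_atTop ν).eventually (eventually_ge_nhds hu.2)).exists
  · obtain ⟨b, hb⟩ :=
      eventually_atBot.1 ((tendsto_cdf_atBot ν).eventually (eventually_lt_nhds hu.1))
    exact ⟨b, fun y hy => le_of_not_gt fun hyb => (hy.trans_lt (hb y hyb.le)).false⟩

section

variable {Ω : Type*} [MeasurableSpace Ω] {μ : Measure Ω} [IsProbabilityMeasure μ] {Y : Ω → ℝ}

theorem lowerQuantile_eq_sInf_cdf (hY : AEMeasurable Y μ) (u : ℝ) :
    lowerQuantile μ Y u = sInf {y | u ≤ cdf (μ.map Y) y} := by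
  have := Measure.isProbabilityMeasure_map hY
  rw [lowerQuantile]
  congr 1
  ext y
  change ENNReal.ofReal u ≤ μ (Y ⁻¹' Iic y) ↔ u ≤ cdf (μ.map Y) y
  rw [← Measure.map_apply_of_aemeasurable hY measurableSet_Iic, ← ofReal_cdf,
    ENNReal.ofReal_le_ofReal_iff (cdf_nonneg _ y)]

theorem lowerQuantile_le_iff (hY : AEMeasurable Y μ) {u : ℝ} (hu : u ∈ Ioo 0 1) (s : ℝ) :
    lowerQuantile μ Y u ≤ s ↔ u ≤ cdf (μ.map Y) s := by
  rw [lowerQuantile_eq_sInf_cdf hY]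
  exact sInf_le_iff_le_cdf _ hu s

theorem monotoneOn_lowerQuantile (hY : AEMeasurable Y μ) :
    MonotoneOn (lowerQuantile μ Y) (Ioo 0 1) := fun _ hu _ hw huw =>
  (lowerQuantile_le_iff hY hu _).2 (huw.trans ((lowerQuantile_le_iff hY hw _).1 le_rfl))

theorem aemeasurable_lowerQuantile (hY : AEMeasurable Y μ) :
    AEMeasurable (lowerQuantile μ Y) (volume.restrict (Ioo 0 1)) :=
  aemeasurable_restrict_of_monotoneOn measurableSet_Ioo (monotoneOn_lowerQuantile hY)

theorem volume_Ioo_zero_one_inter_Iic {c : ℝ} (hc : c ∈ Icc 0 1) :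
    volume (Ioo 0 1 ∩ Iic c) = ENNReal.ofReal c := by
  rcases hc.2.lt_or_eq with hc1 | rfl
  · have : Ioo 0 1 ∩ Iic c = Ioc 0 c := by
      ext u
      simp only [mem_inter_iff, mem_Ioo, mem_Iic, mem_Ioc]
      grind
    rw [this, Real.volume_Ioc, sub_zero]
  · rw [inter_eq_left.2 fun u hu => hu.2.le, Real.volume_Ioo, sub_zero]

theorem map_lowerQuantile (hY : AEMeasurable Y μ) :
    (volume.restrict (Ioo 0 1)).map (lowerQuantile μ Y) = μ.map Y := by
  have := Measure.isProbabilityMeasure_map hY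
  have hq := aemeasurable_lowerQuantile hY
  refine Measure.ext_of_Iic _ _ fun s => ?_
  have hpre : lowerQuantile μ Y ⁻¹' Iic s ∩ Ioo 0 1 = Ioo 0 1 ∩ Iic (cdf (μ.map Y) s) := by
    ext u
    simp only [mem_inter_iff, mem_preimage, mem_Iic]
    exact ⟨fun ⟨h, hu⟩ => ⟨hu, (lowerQuantile_le_iff hY hu s).1 h⟩,
      fun ⟨hu, h⟩ => ⟨(lowerQuantile_le_iff hY hu s).2 h, hu⟩⟩
  rw [Measure.map_apply_of_aemeasurable hq measurableSet_Iic,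
    Measure.restrict_apply' measurableSet_Ioo, hpre,
    volume_Ioo_zero_one_inter_Iic ⟨cdf_nonneg _ s, cdf_le_one _ s⟩, ofReal_cdf]

theorem intervalIntegral_lowerQuantile_eq_setIntegral (hY : AEMeasurable Y μ) {α : ℝ}
    (hα : α ∈ Ioo 0 1) (hcont : μ {ω | Y ω = lowerQuantile μ Y α} = 0) :
    ∫ u in α..1, lowerQuantile μ Y u = ∫ ω in {ω | lowerQuantile μ Y α ≤ Y ω}, Y ω ∂μ := by
  set q := lowerQuantile μ Y
  set v := q α
  set P := volume.restrict (Ioo (0 : ℝ) 1)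
  have hq : AEMeasurable q P := aemeasurable_lowerQuantile hY
  have hmap : P.map q = μ.map Y := map_lowerQuantile hY
  have hnull : P (q ⁻¹' {v}) = 0 := by
    rw [← Measure.map_apply_of_aemeasurable hq (measurableSet_singleton v), hmap,
      Measure.map_apply_of_aemeasurable hY (measurableSet_singleton v)]
    exact hcont
  have hset : Ioi α =ᵐ[P] q ⁻¹' Ici v := by
    filter_upwards [ae_restrict_mem measurableSet_Ioo, measure_eq_zero_iff_ae_notMem.1 hnull]
      with u hu hne
    refine propext ⟨fun hαu => monotoneOn_lowerQuantile hY hα hu hαu.le, fun hvu => ?_⟩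
    by_contra huα
    exact hne (le_antisymm (monotoneOn_lowerQuantile hY hu hα (not_lt.1 huα)) hvu)
  calc ∫ u in α..1, q u = ∫ u in Ioi α, q u ∂P := by
        rw [intervalIntegral.integral_of_le hα.2.le, integral_Ioc_eq_integral_Ioo,
          Measure.restrict_restrict measurableSet_Ioi, Ioi_inter_Ioo, max_eq_left hα.1.le]
    _ = ∫ u in q ⁻¹' Ici v, q u ∂P := setIntegral_congr_set hset
    _ = ∫ y in Ici v, y ∂(P.map q) :=
        (setIntegral_map measurableSet_Ici aestronglyMeasurable_id hq).symm
    _ = ∫ ω in Y ⁻¹' Ici v, Y ω ∂μ := by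
        rw [hmap]
        exact setIntegral_map measurableSet_Ici aestronglyMeasurable_id hY

end

theorem expectedShortfall_euler_decomposition_general {Ω : Type*} [MeasurableSpace Ω]
    (μ : Measure Ω) [IsProbabilityMeasure μ] {n : ℕ} (X : Fin n → Ω → ℝ)
    (hX : ∀ i, Integrable (X i) μ) (α : ℝ) (hα : α ∈ Set.Ioo (0 : ℝ) 1)
    (hmeas : Measurable fun ω => ∑ i, X i ω)
    (hcont : μ {ω | (∑ i, X i ω) = -valueAtRisk μ (fun ω' => ∑ i, X i ω') α} = 0) :
    expectedShortfall μ (fun ω => ∑ i, X i ω) α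
        = -((∫ ω in {ω | (∑ i, X i ω) ≤ -valueAtRisk μ (fun ω' => ∑ i, X i ω') α},
              (∑ i, X i ω) ∂μ) / (1 - α)) ∧
      ∑ i, (-(1 - α)⁻¹ *
          ∫ ω in {ω | (∑ j, X j ω) ≤ -valueAtRisk μ (fun ω' => ∑ j, X j ω') α}, X i ω ∂μ)
        = expectedShortfall μ (fun ω => ∑ i, X i ω) α := by
  set v := valueAtRisk μ (fun ω => ∑ i, X i ω) α
  set T := {ω | (∑ i, X i ω) ≤ -v}
  have htail : ∫ u in α..1, valueAtRisk μ (fun ω => ∑ i, X i ω) u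
      = -∫ ω in T, (∑ i, X i ω) ∂μ := by
    have hT : {ω | v ≤ -∑ i, X i ω} = T := by
      ext ω
      exact le_neg (b := ∑ i, X i ω)
    have hlevel : μ {ω | -∑ i, X i ω = v} = 0 := by simpa only [neg_eq_iff_eq_neg] using hcont
    rw [← integral_neg, ← hT]
    exact intervalIntegral_lowerQuantile_eq_setIntegral (Y := fun ω => -∑ i, X i ω)
      hmeas.neg.aemeasurable hα hlevel
  have hES : expectedShortfall μ (fun ω => ∑ i, X i ω) α
      = -((∫ ω in T, (∑ i, X i ω) ∂μ) / (1 - α)) := by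
    rw [expectedShortfall, htail]
    ring
  refine ⟨hES, ?_⟩
  rw [← Finset.mul_sum, ← integral_finsetSum _ fun i _ => (hX i).restrict, hES]
  ring

/-- Expected Shortfall equals the conditional expectation of `−X` in the tail, and the
Euler ES-contributions `cᵢ = −(1−α)⁻¹ E[Xᵢ 𝟙{X ≤ −VaR_α(X)}]` add up to `ES_α(X)`. -/
theorem expectedShortfall_euler_decomposition {Ω : Type*} [MeasurableSpace Ω]
    (μ : Measure Ω) [IsProbabilityMeasure μ] {n : ℕ} (X : Fin n → Ω → ℝ)
    (hX : ∀ i, Integrable (X i) μ) (α : ℝ) (hα : α ∈ Set.Ioo (0 : ℝ) 1)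
    (hmeas : Measurable fun ω => ∑ i, X i ω)
    (hcont : μ {ω | (∑ i, X i ω) = -valueAtRisk μ (fun ω' => ∑ i, X i ω') α} = 0)
    (hprob : (μ {ω | (∑ i, X i ω) ≤ -valueAtRisk μ (fun ω' => ∑ i, X i ω') α}).toReal
      = 1 - α) :
    expectedShortfall μ (fun ω => ∑ i, X i ω) α
        = -((∫ ω in {ω | (∑ i, X i ω) ≤ -valueAtRisk μ (fun ω' => ∑ i, X i ω') α},
              (∑ i, X i ω) ∂μ) / (1 - α)) ∧
      ∑ i, (-(1 - α)⁻¹ *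
          ∫ ω in {ω | (∑ j, X j ω) ≤ -valueAtRisk μ (fun ω' => ∑ j, X j ω') α}, X i ω ∂μ)
        = expectedShortfall μ (fun ω => ∑ i, X i ω) α :=
  expectedShortfall_euler_decomposition_general μ X hX α hα hmeas hcont
end
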